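/- Suppose |K| = q², α = α⁻¹ (i.e. α(x,y)² = 1 for all x,y ∈ G), and let 0 ≠ C = Re ≤ R = K[G,Θ,α] with e² = e. Write f for the adjoint of e^{(q)}. Then C is Hermitian self-dual, i.e. C = C^{⊥_h}, if and only if e·f = 0 and 1̄ − f = (1̄ − f)·e. -/

import Mathlib

/-!
Write `b⋆` for the adjoint of `b^{(q)}`. Since `q`-th powering is an involutive field automorphism
commuting with `Θ`, and `α = ±1`, the map `b ↦ b⋆` is an involutive anti-automorphism of `R` with
`1̄⋆ = 1̄`, and `⟨a, b⟩_h` is the coefficient of `1̄` in `a·b⋆`. As this form is nondegenerate,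
`b ∈ (Re)^{⊥_h}` iff `e·b⋆ = 0`, and `f = e⋆`. If `C = C^{⊥_h}`, then `e ∈ C^{⊥_h}` gives `e·f = 0`,
and `e·(1̄ − f)⋆ = e − e² = 0` puts `1̄ − f` into `C = Re`, so it is fixed by right multiplication
by `e`. Conversely `e·(re)⋆ = e·f·r⋆ = 0`, and if `e·b⋆ = 0` then `b·f = (e·b⋆)⋆ = 0`, whence
`b = b·(1̄ − f) = b·(1̄ − f)·e ∈ Re`.
-/

open Finset

variable {K : Type*} {G : Type*}

/-- Multiplication of the twisted skew group ring `K[G,Θ,α]`: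
`(Σ_g a_g ḡ)·(Σ_h b_h h̄) = Σ_{g,h} a_g·Θ(g)(b_h)·α(g,h)·(gh)‾`. -/
def tsMul [Field K] [Group G] [Fintype G] [DecidableEq G]
    (Θ : G →* RingAut K) (α : G → G → Kˣ) (a b : G → K) : G → K :=
  fun x => ∑ p : G × G, if p.1 * p.2 = x then a p.1 * Θ p.1 (b p.2) * (α p.1 p.2 : K) else 0

/-- The identity element `1̄` of the twisted skew group ring. -/
def tsOne [Field K] [Group G] [DecidableEq G] : (G → K) := fun x => if x = 1 then 1 else 0

/-- The adjoint map `a ↦ â = Σ_g Θ(g⁻¹)(a_g)·α(g,g⁻¹)·(g⁻¹)‾`. -/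
def tsAdj [Field K] [Group G] (Θ : G →* RingAut K) (α : G → G → Kˣ) (a : G → K) : G → K :=
  fun x => Θ x (a x⁻¹) * (α x⁻¹ x : K)

theorem RingHom.map_eq_self_of_sq_eq_one [Ring K] [NoZeroDivisors K] (σ : K →+* K) {u : K}
    (hu : u ^ 2 = 1) : σ u = u := by
  rcases sq_eq_one_iff.mp hu with rfl | rfl <;> simp

theorem exists_ringHom_eq_pow_of_card_eq_sq [Field K] [Fintype K] {q : ℕ}
    (hq : Fintype.card K = q ^ 2) : ∃ σ : K →+* K, ∀ z, σ z = z ^ q := by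
  obtain ⟨p, hp⟩ := CharP.exists K
  obtain ⟨n, hpp, hcard⟩ := FiniteField.card K p
  obtain ⟨m, -, rfl⟩ := (Nat.dvd_prime_pow hpp).mp
    (hcard ▸ hq ▸ dvd_pow_self q two_ne_zero : q ∣ p ^ (n : ℕ))
  have : Fact p.Prime := ⟨hpp⟩
  exact ⟨iterateFrobenius K p m, iterateFrobenius_def p m⟩

theorem pow_pow_eq_self_of_card_eq_sq [Field K] [Fintype K] {q : ℕ}
    (hq : Fintype.card K = q ^ 2) (z : K) : (z ^ q) ^ q = z := by
  rw [← pow_mul, ← sq, ← hq, FiniteField.pow_card]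

section RingAut

variable [Field K] [Group G] (Θ : G →* RingAut K)

theorem ringAut_hom_mul_apply (g h : G) (z : K) : Θ (g * h) z = Θ g (Θ h z) := by
  rw [map_mul]; rfl

theorem ringAut_hom_apply_inv_apply (g : G) (z : K) : Θ g (Θ g⁻¹ z) = z := by
  rw [← ringAut_hom_mul_apply, mul_inv_cancel, map_one]; rfl

end RingAut

theorem cocycle_inv_mul_eq {M : Type*} [Group G] [CommMonoid M] (α : G → G → M)
    (hnorm : ∀ g : G, α g 1 = 1 ∧ α 1 g = 1)
    (hcoc : ∀ g₁ g₂ g₃ : G, α g₁ (g₂ * g₃) * α g₂ g₃ = α (g₁ * g₂) g₃ * α g₁ g₂) (x : G) :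
    α x⁻¹ x = α x x⁻¹ := by
  simpa [(hnorm x).1, (hnorm x).2] using hcoc x x⁻¹ x

-- The cocycle factors of the `g`-th terms of `(a·b)⋆` and of `b⋆·a⋆` at `x`.
theorem cocycle_val_mul_eq_of_sq_eq_one [Field K] [Group G] (α : G → G → Kˣ)
    (hnorm : ∀ g : G, α g 1 = 1 ∧ α 1 g = 1)
    (hcoc : ∀ g₁ g₂ g₃ : G, α g₁ (g₂ * g₃) * α g₂ g₃ = α (g₁ * g₂) g₃ * α g₁ g₂)
    (hα2 : ∀ x y : G, (α x y : K) ^ 2 = 1) (x g : G) :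
    (α g (g⁻¹ * x⁻¹) : K) * α x⁻¹ x =
      α (g⁻¹ * x⁻¹) (x * g) * α g g⁻¹ * α (x * g) g⁻¹ := by
  have e₁ := congrArg Units.val (hcoc (x * g) g⁻¹ g)
  have e₂ := congrArg Units.val (hcoc (g⁻¹ * x⁻¹) x g)
  have e₃ := congrArg Units.val (hcoc g (g⁻¹ * x⁻¹) x)
  rw [inv_mul_cancel, (hnorm _).1, one_mul, mul_inv_cancel_right] at e₁
  rw [show g⁻¹ * x⁻¹ * x = g⁻¹ by group] at e₂ e₃
  rw [show g * (g⁻¹ * x⁻¹) = x⁻¹ by group] at e₃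
  push_cast at e₁ e₂ e₃
  linear_combination -e₃ + (α g g⁻¹ : K) * (-(α (g⁻¹ * x⁻¹) x : K) * hα2 g⁻¹ g
    - (α g⁻¹ g : K) * e₂ + (α (g⁻¹ * x⁻¹) (x * g) * α (x * g) g⁻¹ : K) * hα2 x g
    + (α (g⁻¹ * x⁻¹) (x * g) * α x g : K) * e₁)

section TwistedGroupRing

variable [Field K] [Group G] [Fintype G] [DecidableEq G] (Θ : G →* RingAut K) (α : G → G → Kˣ)

theorem tsMul_apply (a b : G → K) (x : G) :
    tsMul Θ α a b x = ∑ g : G, a g * Θ g (b (g⁻¹ * x)) * (α g (g⁻¹ * x) : K) := by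
  rw [tsMul, Fintype.sum_prod_type]
  refine sum_congr rfl fun g _ => ?_
  rw [sum_eq_single (g⁻¹ * x), if_pos (mul_inv_cancel_left g x)]
  · intro h _ hne
    rw [if_neg fun hgh => hne (by rw [← hgh, inv_mul_cancel_left])]
  · exact fun h => absurd (mem_univ _) h

theorem tsMul_assoc
    (hcoc : ∀ g₁ g₂ g₃ : G, α g₁ (g₂ * g₃) * α g₂ g₃ = α (g₁ * g₂) g₃ * α g₁ g₂)
    (hstab : ∀ g x y : G, Θ g ((α x y : K)) = (α x y : K)) (a b c : G → K) :
    tsMul Θ α (tsMul Θ α a b) c = tsMul Θ α a (tsMul Θ α b c) := by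
  funext x
  simp only [tsMul_apply, sum_mul, map_sum, mul_sum]
  rw [sum_comm]
  refine sum_congr rfl fun g _ => Fintype.sum_equiv (Equiv.mulLeft g).symm _ _ fun k => ?_
  have hk : ((Equiv.mulLeft g).symm k : G) = g⁻¹ * k := rfl
  have hcoc' := congrArg Units.val (hcoc g (g⁻¹ * k) (k⁻¹ * x))
  rw [mul_inv_cancel_left, show g⁻¹ * k * (k⁻¹ * x) = g⁻¹ * x by group] at hcoc'
  push_cast at hcoc'
  rw [hk, map_mul (Θ g), map_mul (Θ g), hstab, ← ringAut_hom_mul_apply, mul_inv_cancel_left,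
    show (g⁻¹ * k)⁻¹ * (g⁻¹ * x) = k⁻¹ * x by group]
  linear_combination -(a g * Θ g (b (g⁻¹ * k)) * Θ k (c (k⁻¹ * x))) * hcoc'

theorem tsMul_one (hnorm : ∀ g : G, α g 1 = 1 ∧ α 1 g = 1) (a : G → K) :
    tsMul Θ α a tsOne = a := by
  funext x
  rw [tsMul_apply, sum_eq_single x]
  · simp [tsOne, (hnorm x).1]
  · intro g _ hne
    simp [tsOne, inv_mul_eq_one, hne]
  · exact fun h => absurd (mem_univ _) h

theorem tsMul_sub_right (a b c : G → K) :
    tsMul Θ α a (b - c) = tsMul Θ α a b - tsMul Θ α a c := by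
  funext x
  simp only [tsMul_apply, Pi.sub_apply, map_sub, ← sum_sub_distrib]
  exact sum_congr rfl fun g _ => by ring

@[simp]
theorem tsMul_zero_left (b : G → K) : tsMul Θ α 0 b = 0 := by
  funext x; simp [tsMul]

@[simp]
theorem tsMul_zero_right (a : G → K) : tsMul Θ α a 0 = 0 := by
  funext x; simp [tsMul]

theorem eq_zero_of_forall_tsMul_apply_one_eq_zero (s : G → K)
    (h : ∀ r : G → K, tsMul Θ α r s 1 = 0) : s = 0 := by
  funext g
  have hg := h (Pi.single g⁻¹ 1)
  rw [tsMul_apply, sum_eq_single g⁻¹] at hg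
  · simpa [Units.ne_zero] using hg
  · intro y _ hy
    simp [hy]
  · exact fun h => absurd (mem_univ _) h

end TwistedGroupRing

/-- For `σ = (·)^q` this is `b ↦ (b^{(q)})^`. -/
def tsStar [Field K] [Group G] (σ : K →+* K) (Θ : G →* RingAut K) (α : G → G → Kˣ)
    (b : G → K) : G → K :=
  tsAdj Θ α fun g => σ (b g)

section Star

variable [Field K] [Group G] (σ : K →+* K) (Θ : G →* RingAut K) (α : G → G → Kˣ)

theorem tsStar_apply (b : G → K) (x : G) :
    tsStar σ Θ α b x = Θ x (σ (b x⁻¹)) * (α x⁻¹ x : K) :=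
  rfl

@[simp]
theorem tsStar_zero : tsStar σ Θ α (0 : G → K) = 0 := by
  funext x; simp [tsStar_apply]

theorem tsStar_sub (a b : G → K) :
    tsStar σ Θ α (a - b) = tsStar σ Θ α a - tsStar σ Θ α b := by
  funext x; simp [tsStar_apply, sub_mul]

theorem tsStar_one [DecidableEq G] (hnorm : ∀ g : G, α g 1 = 1 ∧ α 1 g = 1) :
    tsStar σ Θ α (tsOne : G → K) = tsOne := by
  funext x
  by_cases hx : x = 1
  · simp [tsStar_apply, tsOne, hx, (hnorm 1).1]
  · simp [tsStar_apply, tsOne, hx]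

theorem tsStar_tsStar (hσ : Function.Involutive σ) (hσΘ : ∀ g z, σ (Θ g z) = Θ g (σ z))
    (hnorm : ∀ g : G, α g 1 = 1 ∧ α 1 g = 1)
    (hcoc : ∀ g₁ g₂ g₃ : G, α g₁ (g₂ * g₃) * α g₂ g₃ = α (g₁ * g₂) g₃ * α g₁ g₂)
    (hstab : ∀ g x y : G, Θ g ((α x y : K)) = (α x y : K))
    (hα2 : ∀ x y : G, (α x y : K) ^ 2 = 1) (b : G → K) :
    tsStar σ Θ α (tsStar σ Θ α b) = b := by
  funext x
  have hinv := congrArg Units.val (cocycle_inv_mul_eq α hnorm hcoc x)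
  rw [tsStar_apply, tsStar_apply, inv_inv, map_mul σ, hσΘ, hσ, map_mul (Θ x),
    ringAut_hom_apply_inv_apply, σ.map_eq_self_of_sq_eq_one (hα2 _ _), hstab, hinv, mul_assoc,
    ← sq, hα2, mul_one]

end Star

section Hermitian

variable [Field K] [Group G] [Fintype G] [DecidableEq G] (σ : K →+* K) (Θ : G →* RingAut K)
  (α : G → G → Kˣ)

theorem tsStar_tsMul (hσΘ : ∀ g z, σ (Θ g z) = Θ g (σ z))
    (hnorm : ∀ g : G, α g 1 = 1 ∧ α 1 g = 1)
    (hcoc : ∀ g₁ g₂ g₃ : G, α g₁ (g₂ * g₃) * α g₂ g₃ = α (g₁ * g₂) g₃ * α g₁ g₂)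
    (hstab : ∀ g x y : G, Θ g ((α x y : K)) = (α x y : K))
    (hα2 : ∀ x y : G, (α x y : K) ^ 2 = 1) (a b : G → K) :
    tsStar σ Θ α (tsMul Θ α a b) = tsMul Θ α (tsStar σ Θ α b) (tsStar σ Θ α a) := by
  funext x
  rw [tsStar_apply, tsMul_apply, tsMul_apply, map_sum, map_sum, sum_mul]
  refine Fintype.sum_equiv (Equiv.mulLeft x) _ _ fun g => ?_
  rw [Equiv.coe_mulLeft, show (x * g)⁻¹ * x = g⁻¹ by group, tsStar_apply, tsStar_apply, inv_inv,
    mul_inv_rev]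
  simp only [map_mul σ, map_mul (Θ x), map_mul (Θ (x * g)), hσΘ,
    σ.map_eq_self_of_sq_eq_one (hα2 _ _), hstab, ← ringAut_hom_mul_apply, mul_inv_cancel_right]
  linear_combination (Θ x (σ (a g)) * Θ (x * g) (σ (b (g⁻¹ * x⁻¹)))) *
    cocycle_val_mul_eq_of_sq_eq_one α hnorm hcoc hα2 x g

theorem sum_mul_map_eq_tsMul_tsStar_apply_one
    (hstab : ∀ g x y : G, Θ g ((α x y : K)) = (α x y : K))
    (hα2 : ∀ x y : G, (α x y : K) ^ 2 = 1) (a b : G → K) :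
    ∑ g : G, a g * σ (b g) = tsMul Θ α a (tsStar σ Θ α b) 1 := by
  rw [tsMul_apply]
  refine sum_congr rfl fun g _ => ?_
  rw [mul_one, tsStar_apply, inv_inv, map_mul (Θ g), ringAut_hom_apply_inv_apply, hstab]
  linear_combination -(a g * σ (b g)) * hα2 g g⁻¹

theorem forall_mem_leftIdeal_sum_eq_zero_iff
    (hcoc : ∀ g₁ g₂ g₃ : G, α g₁ (g₂ * g₃) * α g₂ g₃ = α (g₁ * g₂) g₃ * α g₁ g₂)
    (hstab : ∀ g x y : G, Θ g ((α x y : K)) = (α x y : K))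
    (hα2 : ∀ x y : G, (α x y : K) ^ 2 = 1) (e b : G → K) :
    (∀ c : G → K, (∃ r : G → K, c = tsMul Θ α r e) → ∑ g : G, c g * σ (b g) = 0) ↔
      tsMul Θ α e (tsStar σ Θ α b) = 0 := by
  simp only [sum_mul_map_eq_tsMul_tsStar_apply_one σ Θ α hstab hα2, forall_exists_index,
    forall_eq_apply_imp_iff, tsMul_assoc Θ α hcoc hstab]
  exact ⟨eq_zero_of_forall_tsMul_apply_one_eq_zero Θ α _, fun h r => by simp [h]⟩

theorem leftIdeal_eq_tsStar_annihilator_iff (hσ : Function.Involutive σ)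
    (hσΘ : ∀ g z, σ (Θ g z) = Θ g (σ z))
    (hnorm : ∀ g : G, α g 1 = 1 ∧ α 1 g = 1)
    (hcoc : ∀ g₁ g₂ g₃ : G, α g₁ (g₂ * g₃) * α g₂ g₃ = α (g₁ * g₂) g₃ * α g₁ g₂)
    (hstab : ∀ g x y : G, Θ g ((α x y : K)) = (α x y : K))
    (hα2 : ∀ x y : G, (α x y : K) ^ 2 = 1) (e : G → K) (he : tsMul Θ α e e = e) :
    {x : G → K | ∃ r : G → K, x = tsMul Θ α r e} = {b | tsMul Θ α e (tsStar σ Θ α b) = 0} ↔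
      (tsMul Θ α e (tsStar σ Θ α e) = 0 ∧
        tsOne - tsStar σ Θ α e = tsMul Θ α (tsOne - tsStar σ Θ α e) e) := by
  have assoc := tsMul_assoc Θ α hcoc hstab
  have star_mul := tsStar_tsMul σ Θ α hσΘ hnorm hcoc hstab hα2
  have star_star := tsStar_tsStar σ Θ α hσ hσΘ hnorm hcoc hstab hα2
  simp only [Set.ext_iff, Set.mem_ofPred_eq]
  constructor
  · intro hC
    refine ⟨(hC e).mp ⟨e, he.symm⟩, ?_⟩
    obtain ⟨r, hr⟩ := (hC (tsOne - tsStar σ Θ α e)).mpr <| by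
      rw [tsStar_sub, tsStar_one σ Θ α hnorm, star_star, tsMul_sub_right, tsMul_one Θ α hnorm,
        he, sub_self]
    rw [hr, assoc, he]
  · rintro ⟨hef, hfe⟩ b
    constructor
    · rintro ⟨r, rfl⟩
      rw [star_mul, ← assoc, hef, tsMul_zero_left]
    · intro hb
      have hbf : tsMul Θ α b (tsStar σ Θ α e) = 0 := by
        simpa only [star_mul, star_star, tsStar_zero] using congrArg (tsStar σ Θ α) hb
      refine ⟨tsMul Θ α b (tsOne - tsStar σ Θ α e), ?_⟩
      rw [assoc, ← hfe, tsMul_sub_right, tsMul_one Θ α hnorm, hbf, sub_zero]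

end Hermitian

theorem stmt18_general [Field K] [Fintype K] [Group G] [Fintype G] [DecidableEq G]
    (q : ℕ) (hq : Fintype.card K = q ^ 2)
    (Θ : G →* RingAut K) (α : G → G → Kˣ)
    (hnorm : ∀ g : G, α g 1 = 1 ∧ α 1 g = 1)
    (hcoc : ∀ g₁ g₂ g₃ : G, α g₁ (g₂ * g₃) * α g₂ g₃ = α (g₁ * g₂) g₃ * α g₁ g₂)
    (hstab : ∀ g x y : G, Θ g ((α x y : K)) = (α x y : K))
    (hα2 : ∀ x y : G, (α x y : K) ^ 2 = 1)
    (e : G → K) (he : tsMul Θ α e e = e)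
    (f : G → K) (hf : f = tsAdj Θ α (fun g => (e g) ^ q)) :
    ({x : G → K | ∃ r : G → K, x = tsMul Θ α r e} =
        {b : G → K | ∀ c : G → K, (∃ r : G → K, c = tsMul Θ α r e) →
          ∑ g : G, c g * (b g) ^ q = 0}) ↔
      (tsMul Θ α e f = 0 ∧ tsOne - f = tsMul Θ α (tsOne - f) e) := by
  obtain ⟨σ, hσq⟩ := exists_ringHom_eq_pow_of_card_eq_sq hq
  have hσ : Function.Involutive σ := fun z => by
    rw [hσq, hσq, pow_pow_eq_self_of_card_eq_sq hq]
  have hσΘ : ∀ g z, σ (Θ g z) = Θ g (σ z) := fun g z => by rw [hσq, hσq, map_pow]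
  have hfσ : f = tsStar σ Θ α e := by simp only [hf, tsStar, hσq]
  simp only [← hσq, forall_mem_leftIdeal_sum_eq_zero_iff σ Θ α hcoc hstab hα2, hfσ]
  exact leftIdeal_eq_tsStar_annihilator_iff σ Θ α hσ hσΘ hnorm hcoc hstab hα2 e he

/-- Suppose `|K| = q²`, `α = α⁻¹`, and let `0 ≠ C = Re ≤ R` with
`e² = e`; write `f` for the adjoint of `e^{(q)}`.  Then `C` is Hermitian self-dual
(`C = C^{⊥_h}`) iff `e·f = 0` and `1̄ − f = (1̄ − f)·e`. -/
theorem stmt18 [Field K] [Fintype K] [Group G] [Fintype G] [DecidableEq G]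
    (q : ℕ) (hq : Fintype.card K = q ^ 2)
    (Θ : G →* RingAut K) (α : G → G → Kˣ)
    (hnorm : ∀ g : G, α g 1 = 1 ∧ α 1 g = 1)
    (hcoc : ∀ g₁ g₂ g₃ : G, α g₁ (g₂ * g₃) * α g₂ g₃ = α (g₁ * g₂) g₃ * α g₁ g₂)
    (hstab : ∀ g x y : G, Θ g ((α x y : K)) = (α x y : K))
    (hα2 : ∀ x y : G, (α x y : K) ^ 2 = 1)
    (e : G → K) (he : tsMul Θ α e e = e) (he0 : e ≠ 0)
    (f : G → K) (hf : f = tsAdj Θ α (fun g => (e g) ^ q)) :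
    ({x : G → K | ∃ r : G → K, x = tsMul Θ α r e} =
        {b : G → K | ∀ c : G → K, (∃ r : G → K, c = tsMul Θ α r e) →
          ∑ g : G, c g * (b g) ^ q = 0}) ↔
      (tsMul Θ α e f = 0 ∧ tsOne - f = tsMul Θ α (tsOne - f) e) :=
  stmt18_general q hq Θ α hnorm hcoc hstab hα2 e he f hf
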